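/- arXiv:1901.09951 — 6 statements merged into one kernel-verified Lean document; each statement's English description precedes it below -/
import Mathlib

section
/- With T, H, A defined by the splitting recursion, for every k ≥ 1 the matrix identity (∑_{l=0}^{k} (T l * A (k−l) − B (k−l) * T l)) + (if r < k then ((k − r : ℕ) : ℂ) • T (k − r) else 0) = 0 holds. (This says the formal series T(z) = ∑_k (T k) z^k with T 0 = 1 conjugates the coefficient matrix B(z) = z^{−r−1}∑_k (B k) z^k to the diagonal matrix A(z) = z^{−r−1}∑_k (A k) z^k, coefficient by coefficient.) -/
/-- the splitting recursion yields a formal conjugation of `B(z)` to the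
diagonal matrix `A(z)`, coefficient by coefficient. -/
theorem splitting_recursion_conjugation_identity
    (p r : ℕ) (hp : 1 ≤ p) (hr : 1 ≤ r)
    (α : Fin p → ℂ) (hα : Function.Injective α)
    (B T H A : ℕ → Matrix (Fin p) (Fin p) ℂ)
    (hB0 : B 0 = Matrix.diagonal α)
    (hT0 : T 0 = 1) (hH0 : H 0 = 0) (hA0 : A 0 = B 0)
    (hH : ∀ k, 1 ≤ k → H k =
      (∑ l ∈ Finset.Ico 1 k, (T l * A (k - l) - B (k - l) * T l)) +
        (if r < k then ((k - r : ℕ) : ℂ) • T (k - r) else 0))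
    (hA : ∀ k, 1 ≤ k → A k = Matrix.diagonal fun j => (B k - H k) j j)
    (hT : ∀ k, 1 ≤ k → ∀ i j : Fin p,
      T k i j = if i = j then 0 else (B k - H k) i j / (α j - α i)) :
    ∀ k, 1 ≤ k →
      (∑ l ∈ Finset.range (k + 1), (T l * A (k - l) - B (k - l) * T l)) +
        (if r < k then ((k - r : ℕ) : ℂ) • T (k - r) else 0) = 0 := by
  intro k hk
  have hsum : ∑ l ∈ Finset.range (k + 1), (T l * A (k - l) - B (k - l) * T l)
      = (A k - B k) + ((∑ l ∈ Finset.Ico 1 k, (T l * A (k - l) - B (k - l) * T l))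
        + (T k * Matrix.diagonal α - Matrix.diagonal α * T k)) := by
    rw [Finset.range_eq_Ico, Finset.sum_eq_sum_Ico_succ_bot (by omega : 0 < k + 1),
      Finset.sum_Ico_succ_top (by omega : 1 ≤ k)]
    simp [hT0, hA0, hB0, Nat.sub_self]
  rw [hsum]
  have key : (A k - B k) + (T k * Matrix.diagonal α - Matrix.diagonal α * T k) + H k = 0 := by
    ext i j
    by_cases hij : i = j
    · subst hij
      simp [hA k hk, Matrix.mul_diagonal, Matrix.diagonal_mul, Matrix.sub_apply,
        Matrix.add_apply]
      ring
    · have hne : α j - α i ≠ 0 := sub_ne_zero.mpr fun h => hij (hα h.symm)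
      simp [hA k hk, Matrix.mul_diagonal, Matrix.diagonal_mul, Matrix.sub_apply,
        Matrix.add_apply, Matrix.diagonal_apply_ne _ hij, hT k hk i j, hij]
      field_simp
      ring
  calc (A k - B k) + ((∑ l ∈ Finset.Ico 1 k, (T l * A (k - l) - B (k - l) * T l))
        + (T k * Matrix.diagonal α - Matrix.diagonal α * T k))
        + (if r < k then ((k - r : ℕ) : ℂ) • T (k - r) else 0)
      = (A k - B k) + (T k * Matrix.diagonal α - Matrix.diagonal α * T k) + H k := by
        rw [hH k hk]; abel
    _ = 0 := key
end

section
/- The splitting recursion is the unique formal diagonalization: if T', A' : ℕ → Matrix (Fin p) (Fin p) ℂ satisfy T' 0 = 1, A' 0 = B 0, each A' k is diagonal, each T' k for k ≥ 1 has zero diagonal entries, and for every k ≥ 1 the identity (∑_{l=0}^{k} (T' l * A' (k−l) − B (k−l) * T' l)) + (if r < k then ((k − r : ℕ) : ℂ) • T' (k − r) else 0) = 0 holds, then T' k = T k and A' k = A k for all k, where T, A are given by the splitting recursion. -/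
/-- the splitting recursion is the unique formal diagonalization. -/
theorem splitting_recursion_unique
    (p r : ℕ) (hp : 1 ≤ p) (hr : 1 ≤ r)
    (α : Fin p → ℂ) (hα : Function.Injective α)
    (B T H A : ℕ → Matrix (Fin p) (Fin p) ℂ)
    (hB0 : B 0 = Matrix.diagonal α)
    (hT0 : T 0 = 1) (hH0 : H 0 = 0) (hA0 : A 0 = B 0)
    (hH : ∀ k, 1 ≤ k → H k =
      (∑ l ∈ Finset.Ico 1 k, (T l * A (k - l) - B (k - l) * T l)) +
        (if r < k then ((k - r : ℕ) : ℂ) • T (k - r) else 0))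
    (hA : ∀ k, 1 ≤ k → A k = Matrix.diagonal fun j => (B k - H k) j j)
    (hT : ∀ k, 1 ≤ k → ∀ i j : Fin p,
      T k i j = if i = j then 0 else (B k - H k) i j / (α j - α i))
    (T' A' : ℕ → Matrix (Fin p) (Fin p) ℂ)
    (hT'0 : T' 0 = 1) (hA'0 : A' 0 = B 0)
    (hA'diag : ∀ k, (A' k).IsDiag)
    (hT'diag : ∀ k, 1 ≤ k → ∀ j, T' k j j = 0)
    (hrec : ∀ k, 1 ≤ k →
      (∑ l ∈ Finset.range (k + 1), (T' l * A' (k - l) - B (k - l) * T' l)) +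
        (if r < k then ((k - r : ℕ) : ℂ) • T' (k - r) else 0) = 0) :
    ∀ k, T' k = T k ∧ A' k = A k := by
  intro k
  induction k using Nat.strong_induction_on with
  | _ k ih =>
    rcases Nat.eq_zero_or_pos k with hk0 | hk
    · subst hk0
      exact ⟨by rw [hT'0, hT0], by rw [hA'0, hA0]⟩
    · -- main step
      have htail : (if r < k then ((k - r : ℕ) : ℂ) • T' (k - r) else 0)
          = (if r < k then ((k - r : ℕ) : ℂ) • T (k - r) else 0) := by
        split
        · rename_i h; rw [(ih (k - r) (by omega)).1]
        · rfl
      have key2 : A' k - B k + H k + (T' k * B 0 - B 0 * T' k) = 0 := by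
        have key := hrec k hk
        rw [Finset.range_eq_Ico, Finset.sum_eq_sum_Ico_succ_bot (by omega),
          Finset.sum_Ico_succ_top hk,
          Finset.sum_congr rfl (fun l hl => by
            obtain ⟨h1, h2⟩ := Finset.mem_Ico.mp hl
            rw [(ih l (by omega)).1, (ih (k - l) (by omega)).2]),
          htail] at key
        simp only [Nat.sub_zero, Nat.sub_self, hT'0, hA'0, one_mul, mul_one] at key
        rw [hH k hk]
        set X := (if r < k then ((k - r : ℕ) : ℂ) • T (k - r) else 0) with hX
        set S := ∑ l ∈ Finset.Ico 1 k, (T l * A (k - l) - B (k - l) * T l) with hS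
        abel_nf at key ⊢
        exact key
      have entry : ∀ i j, A' k i j - B k i j + H k i j
          + (T' k i j * α j - α i * T' k i j) = 0 := by
        intro i j
        have h := congrFun (congrFun key2 i) j
        simpa [Matrix.sub_apply, Matrix.add_apply, hB0, Matrix.mul_diagonal,
          Matrix.diagonal_mul] using h
      have hTk : T' k = T k := by
        ext i j
        rw [hT k hk i j]
        by_cases hij : i = j
        · simpa [hij] using hT'diag k hk j
        · have h := entry i j
          have hA0' : A' k i j = 0 := hA'diag k hij
          have hne : α j - α i ≠ 0 :=
            sub_ne_zero.mpr (fun h' => hij (hα h').symm)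
          rw [if_neg hij, eq_div_iff hne, Matrix.sub_apply]
          linear_combination h - hA0'
      have hAk : A' k = A k := by
        rw [hA k hk]
        ext i j
        by_cases hij : i = j
        · subst hij
          have h := entry i i
          rw [hT'diag k hk i] at h
          simp only [Matrix.diagonal_apply_eq, Matrix.sub_apply]
          linear_combination h
        · rw [Matrix.diagonal_apply_ne _ hij]
          exact hA'diag k hij
      exact ⟨hTk, hAk⟩
end

section
/- With T, H, A defined by the splitting recursion and ρ a spectral gap for α, for every k with 1 ≤ k ≤ r one has ‖H k‖ ≤ ∑_{l=1}^{k−1} (1/ρ)(‖B l‖ + ‖H l‖)(2‖B (k−l)‖ + ‖H (k−l)‖). -/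
attribute [local instance] Matrix.linftyOpNormedAddCommGroup

/-!
For `k ≤ r` the shift term of the recursion is absent, so `H k` is a sum of terms
`T l * A (k - l) - B (k - l) * T l`, each bounded by `‖T l‖ (‖A (k - l)‖ + ‖B (k - l)‖)`.
Off the diagonal, `T l` is `B l - H l` divided entrywise by the eigenvalue differences
`α j - α i`, all of size at least `ρ`, so `‖T l‖ ≤ ‖B l - H l‖ / ρ`; and `A (k - l)` is the diagonal
of `B (k - l) - H (k - l)`, so its norm is at most `‖B (k - l)‖ + ‖H (k - l)‖`.
-/

namespace Matrix

variable {m n α 𝕜 : Type*} [Fintype m] [Fintype n]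

section NormedAddCommGroup

variable [NormedAddCommGroup α]

theorem linfty_opNorm_le_iff {M : Matrix m n α} {c : ℝ} (hc : 0 ≤ c) :
    ‖M‖ ≤ c ↔ ∀ i, ∑ j, ‖M i j‖ ≤ c := by
  lift c to NNReal using hc
  rw [linfty_opNorm_def, NNReal.coe_le_coe, Finset.sup_le_iff]
  simp only [Finset.mem_univ, true_implies, ← NNReal.coe_le_coe, NNReal.coe_sum, coe_nnnorm]

theorem norm_entry_le_linfty_opNorm (M : Matrix m n α) (i : m) (j : n) : ‖M i j‖ ≤ ‖M‖ :=
  (Finset.single_le_sum (f := fun j => ‖M i j‖) (fun _ _ => norm_nonneg _)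
    (Finset.mem_univ j)).trans ((linfty_opNorm_le_iff (norm_nonneg M)).1 le_rfl i)

theorem linfty_opNorm_diagonal_diag_le [DecidableEq n] (M : Matrix n n α) :
    ‖diagonal fun j => M j j‖ ≤ ‖M‖ := by
  rw [linfty_opNorm_diagonal]
  exact (pi_norm_le_iff_of_nonneg (norm_nonneg M)).2 fun j => norm_entry_le_linfty_opNorm M j j

end NormedAddCommGroup

theorem linfty_opNorm_mul_sub_mul_le [NonUnitalNormedRing α] (T A B : Matrix n n α) :
    ‖T * A - B * T‖ ≤ ‖T‖ * (‖A‖ + ‖B‖) :=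
  calc ‖T * A - B * T‖ ≤ ‖T * A‖ + ‖B * T‖ := norm_sub_le _ _
    _ ≤ ‖T‖ * ‖A‖ + ‖B‖ * ‖T‖ := add_le_add (linfty_opNorm_mul _ _) (linfty_opNorm_mul _ _)
    _ = ‖T‖ * (‖A‖ + ‖B‖) := by ring

/-- `N` is the off-diagonal solution of `N * diagonal α - diagonal α * N = M`. -/
theorem linfty_opNorm_le_div_of_spectralGap [NormedField 𝕜] [DecidableEq n]
    {M N : Matrix n n 𝕜} {α : n → 𝕜} {ρ : ℝ} (hρ : 0 < ρ)
    (hgap : ∀ i j, i ≠ j → ρ ≤ ‖α i - α j‖)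
    (hN : ∀ i j, N i j = if i = j then 0 else M i j / (α j - α i)) :
    ‖N‖ ≤ ‖M‖ / ρ := by
  refine (linfty_opNorm_le_iff (by positivity)).2 fun i => ?_
  have hentry : ∀ j, ‖N i j‖ ≤ ‖M i j‖ / ρ := fun j => by
    rw [hN]
    split_ifs with hij
    · rw [norm_zero]; positivity
    · rw [norm_div]
      gcongr
      exact hgap j i (Ne.symm hij)
  calc ∑ j, ‖N i j‖ ≤ ∑ j, ‖M i j‖ / ρ := Finset.sum_le_sum fun j _ => hentry j
    _ = (∑ j, ‖M i j‖) / ρ := (Finset.sum_div _ _ _).symm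
    _ ≤ ‖M‖ / ρ := by gcongr; exact (linfty_opNorm_le_iff (norm_nonneg M)).1 le_rfl i

end Matrix

theorem splitting_recursion_H_bound_general
    (p r : ℕ)
    (α : Fin p → ℂ)
    (ρ : ℝ) (hρ : 0 < ρ)
    (hgap : ∀ i j : Fin p, i ≠ j → ρ ≤ ‖α i - α j‖)
    (B T H A : ℕ → Matrix (Fin p) (Fin p) ℂ)
    (hH : ∀ k, 1 ≤ k → H k =
      (∑ l ∈ Finset.Ico 1 k, (T l * A (k - l) - B (k - l) * T l)) +
        (if r < k then ((k - r : ℕ) : ℂ) • T (k - r) else 0))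
    (hA : ∀ k, 1 ≤ k → A k = Matrix.diagonal fun j => (B k - H k) j j)
    (hT : ∀ k, 1 ≤ k → ∀ i j : Fin p,
      T k i j = if i = j then 0 else (B k - H k) i j / (α j - α i)) :
    ∀ k, 1 ≤ k → k ≤ r →
      ‖H k‖ ≤ ∑ l ∈ Finset.Ico 1 k,
        (1 / ρ) * (‖B l‖ + ‖H l‖) * (2 * ‖B (k - l)‖ + ‖H (k - l)‖) := by
  have hT_le : ∀ l, 1 ≤ l → ‖T l‖ ≤ 1 / ρ * (‖B l‖ + ‖H l‖) := fun l hl =>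
    calc ‖T l‖ ≤ ‖B l - H l‖ / ρ := Matrix.linfty_opNorm_le_div_of_spectralGap hρ hgap (hT l hl)
      _ ≤ (‖B l‖ + ‖H l‖) / ρ := by gcongr; exact norm_sub_le _ _
      _ = 1 / ρ * (‖B l‖ + ‖H l‖) := by ring
  have hA_le : ∀ l, 1 ≤ l → ‖A l‖ ≤ ‖B l‖ + ‖H l‖ := fun l hl => by
    rw [hA l hl]
    exact (Matrix.linfty_opNorm_diagonal_diag_le _).trans (norm_sub_le _ _)
  intro k hk hkr
  rw [hH k hk, if_neg (not_lt.2 hkr), add_zero]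
  refine (norm_sum_le _ _).trans (Finset.sum_le_sum fun l hl => ?_)
  obtain ⟨hl, hlk⟩ := Finset.mem_Ico.1 hl
  calc ‖T l * A (k - l) - B (k - l) * T l‖ ≤ ‖T l‖ * (‖A (k - l)‖ + ‖B (k - l)‖) :=
        Matrix.linfty_opNorm_mul_sub_mul_le _ _ _
    _ ≤ 1 / ρ * (‖B l‖ + ‖H l‖) * (2 * ‖B (k - l)‖ + ‖H (k - l)‖) := by
        have hA_le' := hA_le (k - l) (by omega)
        exact mul_le_mul (hT_le l hl) (by linarith) (by positivity) (by positivity)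

/-- norm recursion bound for the matrices `H k` of the splitting recursion. -/
theorem splitting_recursion_H_bound
    (p r : ℕ) (hp : 1 ≤ p) (hr : 1 ≤ r)
    (α : Fin p → ℂ) (hα : Function.Injective α)
    (ρ : ℝ) (hρ : 0 < ρ)
    (hgap : ∀ i j : Fin p, i ≠ j → ρ ≤ ‖α i - α j‖)
    (B T H A : ℕ → Matrix (Fin p) (Fin p) ℂ)
    (hB0 : B 0 = Matrix.diagonal α)
    (hT0 : T 0 = 1) (hH0 : H 0 = 0) (hA0 : A 0 = B 0)
    (hH : ∀ k, 1 ≤ k → H k =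
      (∑ l ∈ Finset.Ico 1 k, (T l * A (k - l) - B (k - l) * T l)) +
        (if r < k then ((k - r : ℕ) : ℂ) • T (k - r) else 0))
    (hA : ∀ k, 1 ≤ k → A k = Matrix.diagonal fun j => (B k - H k) j j)
    (hT : ∀ k, 1 ≤ k → ∀ i j : Fin p,
      T k i j = if i = j then 0 else (B k - H k) i j / (α j - α i)) :
    ∀ k, 1 ≤ k → k ≤ r →
      ‖H k‖ ≤ ∑ l ∈ Finset.Ico 1 k,
        (1 / ρ) * (‖B l‖ + ‖H l‖) * (2 * ‖B (k - l)‖ + ‖H (k - l)‖) :=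
  splitting_recursion_H_bound_general p r α ρ hρ hgap B T H A hH hA hT
end

section
/- Let δ > 0, ρ > 0, r ≥ 1 and let h : ℕ → ℝ satisfy h k ≥ 0 for all k, h 1 = 0, and, for every k with 2 ≤ k ≤ r, h k ≤ (1/ρ) ∑_{l=1}^{k−1} (δ + h l)(2δ + h (k−l)). Then for every k with 1 ≤ k ≤ r one has h k ≤ δ · P_{k−1}(δ/ρ). -/
/-!
Put `x = δ / ρ` and `Q m = P_m(x)`. The defining recursion of `P` is equivalent to
`Q m = x · ∑_{l=1}^{m} (1 + Q (l-1)) (2 + Q (m-l))` for `m ≥ 1`, which is exactly the majorant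
recursion for `h` after the substitution `h k ↦ δ · Q (k-1)`: indeed
`(1/ρ) (δ (1 + Q a)) (δ (2 + Q b)) = δ · x (1 + Q a) (2 + Q b)`.
Strong induction on `k` then gives `h k ≤ δ · Q (k-1)`.
-/

open Finset Polynomial

section Recursion

variable {R : Type*} [CommSemiring R] {q : ℕ → R} {x : R}

theorem sum_Ico_one_succ_sub_one (f : ℕ → R) (m : ℕ) :
    ∑ l ∈ Ico 1 (m + 1), f (l - 1) = ∑ j ∈ range m, f j := by
  simp [sum_Ico_eq_sum_range]

theorem sum_Ico_one_succ_reflect (f : ℕ → R) (m : ℕ) :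
    ∑ l ∈ Ico 1 (m + 1), f (m - l) = ∑ j ∈ range m, f j := by
  rw [sum_Ico_eq_sum_range, Nat.add_sub_cancel, ← sum_range_reflect f m]
  exact sum_congr rfl fun j hj => by rw [mem_range] at hj; congr 1; omega

theorem eq_mul_sum_of_recursion (hq0 : q 0 = 0)
    (hq : ∀ k, 1 ≤ k → q k = 2 * k * x + ∑ l ∈ Icc 2 k, 3 * x * q (l - 1)
      + ∑ l ∈ Icc 2 (k - 1), x * q (l - 1) * q (k - l))
    {m : ℕ} (hm : 1 ≤ m) :
    q m = x * ∑ l ∈ Ico 1 (m + 1), (1 + q (l - 1)) * (2 + q (m - l)) := by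
  -- the boundary terms `l = 1` and `l = m` of the full sums vanish because `q 0 = 0`
  have hlin : ∑ l ∈ Icc 2 m, q (l - 1) = ∑ j ∈ range m, q j := by
    rw [← sum_Ico_one_succ_sub_one]
    refine sum_subset (fun l hl => by simp only [mem_Icc, mem_Ico] at hl ⊢; omega)
      fun l hl hl' => ?_
    simp only [mem_Icc, mem_Ico, not_and_or] at hl hl'
    rw [show l = 1 by omega, Nat.sub_self, hq0]
  have hquad : ∑ l ∈ Icc 2 (m - 1), q (l - 1) * q (m - l)
      = ∑ l ∈ Ico 1 (m + 1), q (l - 1) * q (m - l) := by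
    refine sum_subset (fun l hl => by simp only [mem_Icc, mem_Ico] at hl ⊢; omega)
      fun l hl hl' => ?_
    simp only [mem_Icc, mem_Ico, not_and_or] at hl hl'
    rcases (by omega : l = 1 ∨ l = m) with rfl | rfl <;> simp [hq0]
  have hexpand : ∀ l, (1 + q (l - 1)) * (2 + q (m - l))
      = 2 + 2 * q (l - 1) + q (m - l) + q (l - 1) * q (m - l) := fun l => by ring
  rw [hq m hm]
  simp only [mul_assoc x, ← mul_sum, hlin, hquad, hexpand, sum_add_distrib, sum_const,
    Nat.card_Ico, nsmul_eq_mul, sum_Ico_one_succ_sub_one, sum_Ico_one_succ_reflect,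
    Nat.add_sub_cancel]
  ring

end Recursion

theorem le_mul_of_majorant_recursion {δ ρ : ℝ} (hδ : 0 ≤ δ) (hρ : 0 ≤ ρ) {r : ℕ}
    {h q : ℕ → ℝ} (hpos : ∀ k, 0 ≤ h k) (h1 : h 1 = 0) (hq0 : q 0 = 0)
    (hq : ∀ m, 1 ≤ m →
      q m = δ / ρ * ∑ l ∈ Ico 1 (m + 1), (1 + q (l - 1)) * (2 + q (m - l)))
    (hrec : ∀ k, 2 ≤ k → k ≤ r →
      h k ≤ (1 / ρ) * ∑ l ∈ Ico 1 k, (δ + h l) * (2 * δ + h (k - l))) :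
    ∀ k, 1 ≤ k → k ≤ r → h k ≤ δ * q (k - 1) := by
  intro k
  induction k using Nat.strong_induction_on with
  | _ k ih =>
    intro hk1 hkr
    obtain rfl | hk2 : k = 1 ∨ 2 ≤ k := by omega
    · simp [h1, hq0]
    have hterm : ∀ l ∈ Ico 1 k, (δ + h l) * (2 * δ + h (k - l))
        ≤ δ * (1 + q (l - 1)) * (δ * (2 + q (k - 1 - l))) := by
      intro l hl
      rw [mem_Ico] at hl
      have hl1 := ih l (by omega) (by omega) (by omega)
      have hl2 := ih (k - l) (by omega) (by omega) (by omega)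
      rw [show k - l - 1 = k - 1 - l by omega] at hl2
      exact mul_le_mul (by linarith) (by linarith) (by linarith [hpos (k - l)])
        (by linarith [hpos l])
    calc h k ≤ (1 / ρ) * ∑ l ∈ Ico 1 k, (δ + h l) * (2 * δ + h (k - l)) := hrec k hk2 hkr
      _ ≤ (1 / ρ) * ∑ l ∈ Ico 1 k, δ * (1 + q (l - 1)) * (δ * (2 + q (k - 1 - l))) :=
        mul_le_mul_of_nonneg_left (sum_le_sum hterm) (by positivity)
      _ = δ * (δ / ρ * ∑ l ∈ Ico 1 k, (1 + q (l - 1)) * (2 + q (k - 1 - l))) := by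
        simp only [mul_sum]
        exact sum_congr rfl fun l _ => by ring
      _ = δ * q (k - 1) := by rw [hq (k - 1) (by omega), Nat.sub_add_cancel hk1]

theorem scalar_recursion_polynomial_bound_general
    (δ ρ : ℝ) (hδ : 0 < δ) (hρ : 0 < ρ) (r : ℕ)
    (P : ℕ → Polynomial ℝ)
    (hP0 : P 0 = 0)
    (hP1 : P 1 = Polynomial.C 2 * Polynomial.X)
    (hPk : ∀ k, 2 ≤ k → P k =
      Polynomial.C (2 * (k : ℝ)) * Polynomial.X
        + ∑ l ∈ Finset.Icc 2 k, Polynomial.C 3 * Polynomial.X * P (l - 1)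
        + ∑ l ∈ Finset.Icc 2 (k - 1), Polynomial.X * P (l - 1) * P (k - l))
    (h : ℕ → ℝ) (hpos : ∀ k, 0 ≤ h k) (h1 : h 1 = 0)
    (hrec : ∀ k, 2 ≤ k → k ≤ r →
      h k ≤ (1 / ρ) * ∑ l ∈ Finset.Ico 1 k, (δ + h l) * (2 * δ + h (k - l))) :
    ∀ k, 1 ≤ k → k ≤ r → h k ≤ δ * (P (k - 1)).eval (δ / ρ) := by
  have hP : ∀ k, 1 ≤ k → P k = 2 * (k : ℝ[X]) * X + ∑ l ∈ Icc 2 k, 3 * X * P (l - 1)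
      + ∑ l ∈ Icc 2 (k - 1), X * P (l - 1) * P (k - l) := by
    intro k hk
    obtain rfl | hk2 : k = 1 ∨ 2 ≤ k := by omega
    · simp [hP1, C_ofNat]
    · simp [hPk k hk2, C_mul, C_ofNat]
  refine le_mul_of_majorant_recursion (q := fun n => (P n).eval (δ / ρ)) hδ.le hρ.le hpos h1
    (by simp [hP0]) (fun m hm => ?_) hrec
  simp [eq_mul_sum_of_recursion hP0 hP hm, eval_finsetSum]

/-- the scalar majorant recursion is bounded by `δ · P_{k-1}(δ/ρ)`. -/
theorem scalar_recursion_polynomial_bound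
    (δ ρ : ℝ) (hδ : 0 < δ) (hρ : 0 < ρ) (r : ℕ) (hr : 1 ≤ r)
    (P : ℕ → Polynomial ℝ)
    (hP0 : P 0 = 0)
    (hP1 : P 1 = Polynomial.C 2 * Polynomial.X)
    (hPk : ∀ k, 2 ≤ k → P k =
      Polynomial.C (2 * (k : ℝ)) * Polynomial.X
        + ∑ l ∈ Finset.Icc 2 k, Polynomial.C 3 * Polynomial.X * P (l - 1)
        + ∑ l ∈ Finset.Icc 2 (k - 1), Polynomial.X * P (l - 1) * P (k - l))
    (h : ℕ → ℝ) (hpos : ∀ k, 0 ≤ h k) (h1 : h 1 = 0)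
    (hrec : ∀ k, 2 ≤ k → k ≤ r →
      h k ≤ (1 / ρ) * ∑ l ∈ Finset.Ico 1 k, (δ + h l) * (2 * δ + h (k - l))) :
    ∀ k, 1 ≤ k → k ≤ r → h k ≤ δ * (P (k - 1)).eval (δ / ρ) :=
  scalar_recursion_polynomial_bound_general δ ρ hδ hρ r P hP0 hP1 hPk h hpos h1 hrec
end

section
/- For every k ≥ 1, the polynomial P_k has degree exactly k, all of its coefficients are nonnegative, its constant coefficient is 0, its coefficient of x is 2k, and for k ≥ 2 its coefficient of x² is 3k(k−1). -/
/-!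
Pulling out the common factor `X`, the recursion reads `P k = X * Q k` with
`Q k = 2k + 3 ∑_{j<k} P j + ∑_l P (l-1) P (k-l)` (this is `cofactor P k`), which also covers
`k = 1` since `Q 1 = 2`. By strong induction, `Q k` is built from polynomials with nonnegative
coefficients, has degree `≤ k - 1`, and its coefficient of `x^(k-1)` is positive because it
contains `3 P (k-1)` (or is `2` when `k = 1`). As no `P j` has a constant term, the products
`P (l-1) P (k-l)` contribute neither to the constant nor to the linear coefficient of `Q k`,
which are therefore `2k` and `3 ∑_{j<k} 2j = 3k(k-1)`.
-/

open Polynomial Finset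

namespace Polynomial

variable {R : Type*} [Semiring R]

lemma coeff_mul_one_eq_zero {p q : R[X]} (hp : p.coeff 0 = 0) (hq : q.coeff 0 = 0) :
    (p * q).coeff 1 = 0 := by
  simp [coeff_mul, Nat.antidiagonal_succ, hp, hq]

variable [PartialOrder R] [IsOrderedRing R]

variable (R) in
def nonnegCoeffs : Subsemiring R[X] where
  carrier := {p | ∀ n, 0 ≤ p.coeff n}
  mul_mem' {p q} hp hq n := by
    rw [coeff_mul]
    exact sum_nonneg fun x _ => mul_nonneg (hp _) (hq _)
  one_mem' n := by rw [coeff_one]; split_ifs <;> simp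
  add_mem' hp hq n := by rw [coeff_add]; exact add_nonneg (hp n) (hq n)
  zero_mem' n := by simp

lemma C_mem_nonnegCoeffs {a : R} (ha : 0 ≤ a) : C a ∈ nonnegCoeffs R := fun n => by
  rw [coeff_C]; split_ifs <;> simp [ha]

lemma X_mem_nonnegCoeffs : (X : R[X]) ∈ nonnegCoeffs R := fun n => by
  rw [coeff_X]; split_ifs <;> simp

end Polynomial

structure HasExpectedCoeffs (k : ℕ) (p : ℝ[X]) : Prop where
  natDegree_le : p.natDegree ≤ k
  coeff_pos : 0 < p.coeff k
  mem_nonnegCoeffs : p ∈ nonnegCoeffs ℝ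
  coeff_zero : p.coeff 0 = 0
  coeff_one : p.coeff 1 = 2 * k
  coeff_two : p.coeff 2 = 3 * k * (k - 1)

lemma HasExpectedCoeffs.degree_eq {k : ℕ} {p : ℝ[X]} (h : HasExpectedCoeffs k p) :
    p.degree = k :=
  degree_eq_of_le_of_coeff_ne_zero (degree_le_of_natDegree_le h.natDegree_le) h.coeff_pos.ne'

noncomputable def cofactor (P : ℕ → ℝ[X]) (k : ℕ) : ℝ[X] :=
  C (2 * (k : ℝ)) + ∑ l ∈ Icc 2 k, C 3 * P (l - 1) + ∑ l ∈ Icc 2 (k - 1), P (l - 1) * P (k - l)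

lemma X_mul_cofactor (P : ℕ → ℝ[X]) (k : ℕ) :
    X * cofactor P k = C (2 * (k : ℝ)) * X + ∑ l ∈ Icc 2 k, C 3 * X * P (l - 1)
      + ∑ l ∈ Icc 2 (k - 1), X * P (l - 1) * P (k - l) := by
  simp only [cofactor, mul_add, mul_sum, ← mul_assoc, mul_comm X (C _)]

lemma sum_Icc_two_mul_sub_one {k : ℕ} (hk : 1 ≤ k) :
    ∑ l ∈ Icc 2 k, 2 * ((l - 1 : ℕ) : ℝ) = k * (k - 1) := by
  induction k, hk using Nat.le_induction with
  | base => simp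
  | succ k hk ih =>
    rw [sum_Icc_succ_top (by omega), ih]
    push_cast
    ring

section Cofactor

variable {P : ℕ → ℝ[X]} {k l : ℕ}

lemma sub_one_mem_Ico_of_mem_Icc (hl : l ∈ Icc 2 k) : l - 1 ∈ Ico 1 k := by
  simp only [mem_Icc, mem_Ico] at hl ⊢; omega

lemma mem_Ico_of_mem_Icc_pred (hl : l ∈ Icc 2 (k - 1)) : l - 1 ∈ Ico 1 k ∧ k - l ∈ Ico 1 k := by
  simp only [mem_Icc, mem_Ico] at hl ⊢; omega

lemma C_three_mul_mem_nonnegCoeffs (hP : ∀ j ∈ Ico 1 k, HasExpectedCoeffs j (P j))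
    (hl : l ∈ Icc 2 k) : C 3 * P (l - 1) ∈ nonnegCoeffs ℝ :=
  mul_mem (C_mem_nonnegCoeffs (by norm_num)) (hP _ (sub_one_mem_Ico_of_mem_Icc hl)).mem_nonnegCoeffs

lemma sum_mul_mem_nonnegCoeffs (hP : ∀ j ∈ Ico 1 k, HasExpectedCoeffs j (P j)) :
    ∑ l ∈ Icc 2 (k - 1), P (l - 1) * P (k - l) ∈ nonnegCoeffs ℝ :=
  sum_mem fun _ hl => mul_mem (hP _ (mem_Ico_of_mem_Icc_pred hl).1).mem_nonnegCoeffs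
    (hP _ (mem_Ico_of_mem_Icc_pred hl).2).mem_nonnegCoeffs

lemma cofactor_mem_nonnegCoeffs (hP : ∀ j ∈ Ico 1 k, HasExpectedCoeffs j (P j)) :
    cofactor P k ∈ nonnegCoeffs ℝ :=
  add_mem (add_mem (C_mem_nonnegCoeffs (by positivity))
    (sum_mem fun _ hl => C_three_mul_mem_nonnegCoeffs hP hl)) (sum_mul_mem_nonnegCoeffs hP)

lemma natDegree_cofactor_le (hP : ∀ j ∈ Ico 1 k, HasExpectedCoeffs j (P j)) :
    (cofactor P k).natDegree ≤ k - 1 := by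
  refine natDegree_add_le_of_degree_le (natDegree_add_le_of_degree_le ?_ ?_) ?_
  · exact (natDegree_C _).trans_le (Nat.zero_le _)
  · refine natDegree_sum_le_of_forall_le _ _ fun l hl => (natDegree_C_mul_le _ _).trans ?_
    have := (hP _ (sub_one_mem_Ico_of_mem_Icc hl)).natDegree_le
    simp only [mem_Icc] at hl
    omega
  · refine natDegree_sum_le_of_forall_le _ _ fun l hl => ?_
    obtain ⟨hl₁, hl₂⟩ := mem_Ico_of_mem_Icc_pred hl
    refine (natDegree_mul_le_of_le (hP _ hl₁).natDegree_le (hP _ hl₂).natDegree_le).trans ?_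
    simp only [mem_Icc] at hl
    omega

lemma coeff_cofactor_zero (hP : ∀ j ∈ Ico 1 k, HasExpectedCoeffs j (P j)) :
    (cofactor P k).coeff 0 = 2 * k := by
  simp only [cofactor, coeff_add, finsetSum_coeff, coeff_C_zero, mul_coeff_zero]
  rw [sum_eq_zero fun l hl => by rw [(hP _ (sub_one_mem_Ico_of_mem_Icc hl)).coeff_zero, mul_zero],
    sum_eq_zero fun l hl => by rw [(hP _ (mem_Ico_of_mem_Icc_pred hl).1).coeff_zero, zero_mul],
    add_zero, add_zero]

lemma coeff_cofactor_one (hk : 1 ≤ k) (hP : ∀ j ∈ Ico 1 k, HasExpectedCoeffs j (P j)) :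
    (cofactor P k).coeff 1 = 3 * k * (k - 1) := by
  simp only [cofactor, coeff_add, finsetSum_coeff, coeff_C_mul, coeff_C_succ, zero_add]
  rw [sum_eq_zero fun l hl => coeff_mul_one_eq_zero (hP _ (mem_Ico_of_mem_Icc_pred hl).1).coeff_zero
      (hP _ (mem_Ico_of_mem_Icc_pred hl).2).coeff_zero,
    sum_congr rfl fun l hl => by rw [(hP _ (sub_one_mem_Ico_of_mem_Icc hl)).coeff_one],
    ← mul_sum, sum_Icc_two_mul_sub_one hk]
  ring

lemma coeff_cofactor_pos (hk : 1 ≤ k) (hP : ∀ j ∈ Ico 1 k, HasExpectedCoeffs j (P j)) :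
    0 < (cofactor P k).coeff (k - 1) := by
  obtain rfl | hk₂ := hk.eq_or_lt
  · simp [cofactor]
  have hmem : k ∈ Icc 2 k := mem_Icc.2 ⟨hk₂, le_rfl⟩
  have hlead : 0 < (C 3 * P (k - 1)).coeff (k - 1) := by
    rw [coeff_C_mul]
    exact mul_pos three_pos (hP _ (sub_one_mem_Ico_of_mem_Icc hmem)).coeff_pos
  have hsum : (C 3 * P (k - 1)).coeff (k - 1)
      ≤ (∑ l ∈ Icc 2 k, C 3 * P (l - 1)).coeff (k - 1) := by
    rw [finsetSum_coeff]
    exact single_le_sum (f := fun l => (C 3 * P (l - 1)).coeff (k - 1))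
      (fun _ hl => C_three_mul_mem_nonnegCoeffs hP hl _) hmem
  simp only [cofactor, coeff_add]
  linarith [C_mem_nonnegCoeffs (a := 2 * (k : ℝ)) (by positivity) (k - 1),
    sum_mul_mem_nonnegCoeffs hP (k - 1)]

lemma hasExpectedCoeffs_X_mul_cofactor (hk : 1 ≤ k)
    (hP : ∀ j ∈ Ico 1 k, HasExpectedCoeffs j (P j)) : HasExpectedCoeffs k (X * cofactor P k) := by
  obtain ⟨m, rfl⟩ : ∃ m, k = m + 1 := ⟨k - 1, by omega⟩
  refine ⟨?_, ?_, mul_mem X_mem_nonnegCoeffs (cofactor_mem_nonnegCoeffs hP), coeff_X_mul_zero _,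
    (coeff_X_mul _ _).trans (coeff_cofactor_zero hP),
    (coeff_X_mul _ _).trans (coeff_cofactor_one hk hP)⟩
  · exact (natDegree_mul_le_of_le natDegree_X_le (natDegree_cofactor_le hP)).trans (by omega)
  · rw [coeff_X_mul]
    exact coeff_cofactor_pos hk hP

end Cofactor

theorem P_degree_and_coefficients_general
    (P : ℕ → Polynomial ℝ)
    (hP1 : P 1 = Polynomial.C 2 * Polynomial.X)
    (hPk : ∀ k, 2 ≤ k → P k =
      Polynomial.C (2 * (k : ℝ)) * Polynomial.X
        + ∑ l ∈ Finset.Icc 2 k, Polynomial.C 3 * Polynomial.X * P (l - 1)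
        + ∑ l ∈ Finset.Icc 2 (k - 1), Polynomial.X * P (l - 1) * P (k - l)) :
    ∀ k, 1 ≤ k →
      (P k).degree = k ∧
      (∀ n, 0 ≤ (P k).coeff n) ∧
      (P k).coeff 0 = 0 ∧
      (P k).coeff 1 = 2 * k ∧
      (2 ≤ k → (P k).coeff 2 = 3 * k * (k - 1)) := by
  have hcofactor : ∀ k, 1 ≤ k → P k = X * cofactor P k := by
    intro k hk
    obtain rfl | hk₂ := hk.eq_or_lt
    · simp [hP1, cofactor, X_mul_C]
    · rw [hPk k hk₂, X_mul_cofactor]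
  have hshape : ∀ k, 1 ≤ k → HasExpectedCoeffs k (P k) := by
    intro k
    induction k using Nat.strong_induction_on with
    | _ k ih =>
      intro hk
      rw [hcofactor k hk]
      exact hasExpectedCoeffs_X_mul_cofactor hk fun j hj => ih j (mem_Ico.1 hj).2 (mem_Ico.1 hj).1
  intro k hk
  have h := hshape k hk
  exact ⟨h.degree_eq, h.mem_nonnegCoeffs, h.coeff_zero, h.coeff_one, fun _ => h.coeff_two⟩

/-- for `k ≥ 1`, `P k` has degree exactly `k`, nonnegative coefficients,
zero constant coefficient, coefficient `2k` of `x`, and (for `k ≥ 2`) coefficient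
`3k(k-1)` of `x²`. -/
theorem P_degree_and_coefficients
    (P : ℕ → Polynomial ℝ)
    (hP0 : P 0 = 0)
    (hP1 : P 1 = Polynomial.C 2 * Polynomial.X)
    (hPk : ∀ k, 2 ≤ k → P k =
      Polynomial.C (2 * (k : ℝ)) * Polynomial.X
        + ∑ l ∈ Finset.Icc 2 k, Polynomial.C 3 * Polynomial.X * P (l - 1)
        + ∑ l ∈ Finset.Icc 2 (k - 1), Polynomial.X * P (l - 1) * P (k - l)) :
    ∀ k, 1 ≤ k →
      (P k).degree = k ∧
      (∀ n, 0 ≤ (P k).coeff n) ∧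
      (P k).coeff 0 = 0 ∧
      (P k).coeff 1 = 2 * k ∧
      (2 ≤ k → (P k).coeff 2 = 3 * k * (k - 1)) :=
  P_degree_and_coefficients_general P hP1 hPk
end

section
/- (Remark, asymptotics when ε/ρ is unbounded.) For every integer r ≥ 1 there exists a constant c > 0 such that for all real ε, ρ with 0 < ρ ≤ ε, the value δ := c · ε^{1/r} · ρ^{(r−1)/r} (real powers) satisfies δ(1 + P_{r−1}(δ/ρ)) < ε. -/
/-! Writing `t = (ε/ρ)^{1/r} ≥ 1`, one has `δ = c t ρ` and `ε = t^r ρ`, so the claim reads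
`c t (1 + P_{r-1}(c t)) < t^r`. The recurrence shows that `P_{r-1}` has degree at most `r - 1`
and no constant term; hence for `c ≤ 1` one gets `|P_{r-1}(c t)| ≤ A c t^{r-1}`, with `A` the sum
of the absolute values of its coefficients, and the left side is at most `(c + A c²) t^r`,
which is `< t^r` once `c` is small. -/

open Polynomial Finset

section Recurrence

variable (P : ℕ → ℝ[X])

theorem natDegree_le_of_recurrence (hP0 : P 0 = 0) (hP1 : P 1 = C 2 * X)
    (hPk : ∀ k, 2 ≤ k → P k =
      C (2 * (k : ℝ)) * X
        + ∑ l ∈ Icc 2 k, C 3 * X * P (l - 1)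
        + ∑ l ∈ Icc 2 (k - 1), X * P (l - 1) * P (k - l))
    (k : ℕ) : (P k).natDegree ≤ k := by
  induction k using Nat.strong_induction_on with
  | _ k ih =>
  have hCX : ∀ a : ℝ, (C a * X).natDegree ≤ 1 := fun a =>
    natDegree_mul_le_of_le (natDegree_C a).le natDegree_X_le
  rcases k with _ | _ | n
  · simp [hP0]
  · rw [hP1]; exact hCX 2
  · rw [hPk _ (by omega)]
    refine natDegree_add_le_of_degree_le (natDegree_add_le_of_degree_le
      ((hCX _).trans (by omega)) (natDegree_sum_le_of_forall_le _ _ fun l hl => ?_))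
      (natDegree_sum_le_of_forall_le _ _ fun l hl => ?_) <;> rw [mem_Icc] at hl
    · exact (natDegree_mul_le_of_le (hCX 3) (ih (l - 1) (by omega))).trans (by omega)
    · exact (natDegree_mul_le_of_le (natDegree_mul_le_of_le natDegree_X_le
        (ih (l - 1) (by omega))) (ih (n + 2 - l) (by omega))).trans (by omega)

theorem coeff_zero_of_recurrence (hP0 : P 0 = 0) (hP1 : P 1 = C 2 * X)
    (hPk : ∀ k, 2 ≤ k → P k =
      C (2 * (k : ℝ)) * X
        + ∑ l ∈ Icc 2 k, C 3 * X * P (l - 1)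
        + ∑ l ∈ Icc 2 (k - 1), X * P (l - 1) * P (k - l))
    (k : ℕ) : (P k).coeff 0 = 0 := by
  rcases k with _ | _ | n
  · simp [hP0]
  · simp [hP1]
  · simp [hPk (n + 2) (by omega), mul_coeff_zero]

end Recurrence

theorem abs_eval_mul_le_of_coeff_zero {Q : ℝ[X]} {d : ℕ} (hdeg : Q.natDegree ≤ d)
    (h0 : Q.coeff 0 = 0) {c t : ℝ} (hc0 : 0 ≤ c) (hc1 : c ≤ 1) (ht : 1 ≤ t) :
    |Q.eval (c * t)| ≤ (∑ i ∈ range (d + 1), |Q.coeff i|) * c * t ^ d := by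
  rw [eval_eq_sum_range' (Nat.lt_succ_of_le hdeg), mul_assoc, sum_mul]
  refine (abs_sum_le_sum_abs _ _).trans (sum_le_sum fun i hi => ?_)
  rw [mem_range] at hi
  rcases i.eq_zero_or_pos with rfl | hi0
  · simp [h0]
  · rw [abs_mul, abs_pow, abs_of_nonneg (by positivity : 0 ≤ c * t), mul_pow]
    gcongr
    · exact pow_le_of_le_one hc0 hc1 hi0.ne'
    · omega

theorem exists_pos_mul_one_add_eval_lt_pow {Q : ℝ[X]} {d : ℕ} (hdeg : Q.natDegree ≤ d)
    (h0 : Q.coeff 0 = 0) :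
    ∃ c : ℝ, 0 < c ∧ ∀ t : ℝ, 1 ≤ t → c * t * (1 + Q.eval (c * t)) < t ^ (d + 1) := by
  set A := ∑ i ∈ range (d + 1), |Q.coeff i|
  have hA : 0 ≤ A := sum_nonneg fun i _ => abs_nonneg _
  set c := 1 / (2 * (A + 1))
  have hc0 : 0 < c := by positivity
  have hc2 : c * (2 * (A + 1)) = 1 := one_div_mul_cancel (by positivity)
  have hc1 : c ≤ 1 := by nlinarith
  have hcA : c + A * c ^ 2 < 1 := by nlinarith
  refine ⟨c, hc0, fun t ht => ?_⟩
  have hQ := (abs_le.mp (abs_eval_mul_le_of_coeff_zero hdeg h0 hc0.le hc1 ht)).2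
  have ht_le : t ≤ t ^ (d + 1) := le_self_pow₀ ht (by omega)
  calc c * t * (1 + Q.eval (c * t)) ≤ c * t * (1 + A * c * t ^ d) := by gcongr
    _ = c * t + A * c ^ 2 * t ^ (d + 1) := by ring
    _ ≤ (c + A * c ^ 2) * t ^ (d + 1) := by nlinarith
    _ < t ^ (d + 1) := mul_lt_of_lt_one_left (by positivity) hcA

theorem rpow_mul_rpow_one_sub {ε ρ : ℝ} (hε : 0 ≤ ε) (hρ : 0 < ρ) (s : ℝ) :
    ε ^ s * ρ ^ (1 - s) = (ε / ρ) ^ s * ρ := by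
  rw [Real.div_rpow hε hρ.le, Real.rpow_sub hρ, Real.rpow_one]
  field_simp

/-- asymptotics for unbounded `ε/ρ`: for every `r ≥ 1` there is a constant
`c > 0` such that `δ := c·ε^{1/r}·ρ^{(r-1)/r}` satisfies `δ(1 + P_{r-1}(δ/ρ)) < ε`
whenever `0 < ρ ≤ ε`. -/
theorem delta_rpow_asymptotics
    (P : ℕ → Polynomial ℝ)
    (hP0 : P 0 = 0)
    (hP1 : P 1 = Polynomial.C 2 * Polynomial.X)
    (hPk : ∀ k, 2 ≤ k → P k =
      Polynomial.C (2 * (k : ℝ)) * Polynomial.X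
        + ∑ l ∈ Finset.Icc 2 k, Polynomial.C 3 * Polynomial.X * P (l - 1)
        + ∑ l ∈ Finset.Icc 2 (k - 1), Polynomial.X * P (l - 1) * P (k - l))
    (r : ℕ) (hr : 1 ≤ r) :
    ∃ c : ℝ, 0 < c ∧
      ∀ ε ρ : ℝ, 0 < ρ → ρ ≤ ε →
        (c * ε ^ ((1 : ℝ) / r) * ρ ^ (((r : ℝ) - 1) / r)) *
            (1 + (P (r - 1)).eval
              ((c * ε ^ ((1 : ℝ) / r) * ρ ^ (((r : ℝ) - 1) / r)) / ρ)) < ε := by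
  obtain ⟨c, hc, hbound⟩ := exists_pos_mul_one_add_eval_lt_pow
    (natDegree_le_of_recurrence P hP0 hP1 hPk (r - 1))
    (coeff_zero_of_recurrence P hP0 hP1 hPk (r - 1))
  refine ⟨c, hc, fun ε ρ hρ hρε => ?_⟩
  have hr0 : r ≠ 0 := by omega
  set t := (ε / ρ) ^ ((1 : ℝ) / r) with ht_def
  have ht : 1 ≤ t := Real.one_le_rpow ((one_le_div hρ).mpr hρε) (by positivity)
  have htr : t ^ (r - 1 + 1) = ε / ρ := by
    rw [Nat.sub_add_cancel hr, ht_def, one_div]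
    exact Real.rpow_inv_natCast_pow (div_pos (hρ.trans_le hρε) hρ).le hr0
  have hδ : c * ε ^ ((1 : ℝ) / r) * ρ ^ (((r : ℝ) - 1) / r) = c * t * ρ := by
    rw [show ((r : ℝ) - 1) / r = 1 - 1 / r by field_simp, mul_assoc,
      rpow_mul_rpow_one_sub (hρ.le.trans hρε) hρ, mul_assoc]
  have key := hbound t ht
  rw [htr] at key
  rw [hδ, mul_div_cancel_right₀ _ hρ.ne']
  calc c * t * ρ * (1 + (P (r - 1)).eval (c * t))
      = c * t * (1 + (P (r - 1)).eval (c * t)) * ρ := by ring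
    _ < ε / ρ * ρ := by gcongr
    _ = ε := div_mul_cancel₀ _ hρ.ne'
end
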